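/- The minimal Toda form factor is normalized at infinity, F^T(∞) = 1: for every fixed real y with 0 < y < 2π, the limit of F^T(x + iy) as the real number x tends to +∞ exists and equals 1. -/

import Mathlib

open Complex MeasureTheory Topology Filter

/-- The integrand of the minimal form factor of the affine `A_{N−1}`-Toda model. -/
noncomputable def fT (N : ℕ) (B : ℝ) (θ : ℂ) (t : ℝ) : ℂ :=
  (1 / (t : ℂ)) *
    (-4 * Complex.sinh ((t : ℂ) * (N - 1) / N) * Complex.sinh ((t : ℂ) * (B : ℂ) / (2 * N)) *
      Complex.sinh ((t : ℂ) * (2 - (B : ℂ)) / (2 * N)) / (Complex.sinh (t : ℂ)) ^ 2) *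
    Complex.cosh ((t : ℂ) * (1 - θ / (I * (Real.pi : ℂ))))

/-- The minimal form factor of the affine `A_{N−1}`-Toda model. -/
noncomputable def FT (N : ℕ) (B : ℝ) (θ : ℂ) : ℂ :=
  Complex.exp (∫ t in Set.Ioi (0 : ℝ), fT N B θ t)

/-!
Write `θ = x + iy` and `a = 1 - y/π`. The integrand is `g(t) cosh(t(a + ix/π))` with
`g(t) = -4 sinh(αt) sinh(βt) sinh(γt) / (t sinh² t)` and `α + β + γ = 1`, so `g` is bounded
near `0` and `O(e^{-t})` at infinity. Splitting `cosh` into exponentials writes the integral as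
the sum of the Fourier integrals of `g(t) e^{±at} / 2` at frequencies `±x/π`. As `|a| < 1` these
amplitudes are integrable on `(0, ∞)`, so by the Riemann–Lebesgue lemma both integrals tend to
`0` as `x → ∞`, and `F^T(x + iy) → exp 0 = 1`.
-/

open Set

namespace Real

/-- Multiplied by `2 e^{-u}`, this is `1 - 2u ≤ e^{-2u}`. -/
theorem sinh_le_mul_exp (u : ℝ) : sinh u ≤ u * exp u := by
  have h := add_one_le_exp (-(2 * u))
  have hsq : exp (-(2 * u)) = exp (-u) * exp (-u) := by rw [← exp_add]; ring_nf
  have hinv : exp (-u) * exp u = 1 := by rw [← exp_add]; simp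
  rw [sinh_eq]
  nlinarith [exp_pos u, exp_pos (-u)]

theorem sinh_le_exp_div_two (u : ℝ) : sinh u ≤ exp u / 2 := by
  rw [sinh_eq]
  linarith [exp_pos (-u)]

theorem exp_div_four_le_sinh {u : ℝ} (hu : 1 ≤ u) : exp u / 4 ≤ sinh u := by
  have h1 : exp (-u) ≤ 1 := exp_le_one_iff.mpr (by linarith)
  have h2 : 2 ≤ exp u := by linarith [add_one_le_exp u]
  rw [sinh_eq]
  linarith

end Real

noncomputable def sinhRatio (α β γ t : ℝ) : ℝ :=
  Real.sinh (α * t) * Real.sinh (β * t) * Real.sinh (γ * t) / (t * Real.sinh t ^ 2)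

section SinhRatio

variable {α β γ t : ℝ}

theorem sinhRatio_nonneg (hα : 0 ≤ α) (hβ : 0 ≤ β) (hγ : 0 ≤ γ) (ht : 0 ≤ t) :
    0 ≤ sinhRatio α β γ t := by
  unfold sinhRatio
  positivity

theorem sinhRatio_le_of_le_one (hα : 0 ≤ α) (hβ : 0 ≤ β) (hγ : 0 ≤ γ)
    (hsum : α + β + γ ≤ 1) (ht0 : 0 < t) (ht1 : t ≤ 1) : sinhRatio α β γ t ≤ Real.exp 3 := by
  have hsinh (a : ℝ) (ha : 0 ≤ a) (ha1 : a ≤ 1) : Real.sinh (a * t) ≤ t * Real.exp 1 :=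
    calc Real.sinh (a * t) ≤ a * t * Real.exp (a * t) := Real.sinh_le_mul_exp _
      _ ≤ t * Real.exp 1 := by gcongr <;> nlinarith
  have hself : t ≤ Real.sinh t := Real.self_le_sinh_iff.mpr ht0.le
  calc sinhRatio α β γ t
      ≤ (t * Real.exp 1) * (t * Real.exp 1) * (t * Real.exp 1) / (t * t ^ 2) := by
        unfold sinhRatio
        gcongr
        · exact hsinh α hα (by linarith)
        · exact hsinh β hβ (by linarith)
        · exact hsinh γ hγ (by linarith)
    _ = Real.exp 3 := by
        rw [show (3 : ℝ) = 1 + 1 + 1 by norm_num, Real.exp_add, Real.exp_add]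
        field_simp

theorem sinhRatio_le_of_one_le (hβ : 0 ≤ β) (hγ : 0 ≤ γ) (hsum : α + β + γ ≤ 1)
    (ht : 1 ≤ t) : sinhRatio α β γ t ≤ 2 * Real.exp (-t) := by
  have ht0 : 0 < t := by linarith
  have hexp : Real.exp (α * t) * Real.exp (β * t) * Real.exp (γ * t) ≤ Real.exp t := by
    rw [← Real.exp_add, ← Real.exp_add, Real.exp_le_exp]
    nlinarith
  calc sinhRatio α β γ t
      ≤ (Real.exp (α * t) / 2) * (Real.exp (β * t) / 2) * (Real.exp (γ * t) / 2) /
          (1 * (Real.exp t / 4) ^ 2) := by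
        unfold sinhRatio
        gcongr
        · exact Real.sinh_le_exp_div_two _
        · exact Real.sinh_le_exp_div_two _
        · exact Real.sinh_le_exp_div_two _
        · exact Real.exp_div_four_le_sinh ht
    _ = Real.exp (α * t) * Real.exp (β * t) * Real.exp (γ * t) / 8 /
          (Real.exp t ^ 2 / 16) := by
        ring
    _ ≤ Real.exp t / 8 / (Real.exp t ^ 2 / 16) := by gcongr
    _ = 2 * Real.exp (-t) := by
        rw [Real.exp_neg]
        field_simp
        ring

theorem abs_sinhRatio_le (hα : 0 ≤ α) (hβ : 0 ≤ β) (hγ : 0 ≤ γ)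
    (hsum : α + β + γ ≤ 1) (ht : 0 < t) : |sinhRatio α β γ t| ≤ Real.exp 4 * Real.exp (-t) := by
  rw [abs_of_nonneg (sinhRatio_nonneg hα hβ hγ ht.le)]
  rcases le_total t 1 with ht1 | ht1
  · calc sinhRatio α β γ t ≤ Real.exp 3 := sinhRatio_le_of_le_one hα hβ hγ hsum ht ht1
      _ = Real.exp 4 * Real.exp (-1) := by rw [← Real.exp_add]; norm_num
      _ ≤ Real.exp 4 * Real.exp (-t) := by gcongr
  · calc sinhRatio α β γ t ≤ 2 * Real.exp (-t) := sinhRatio_le_of_one_le hβ hγ hsum ht1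
      _ ≤ Real.exp 4 * Real.exp (-t) := by
        gcongr
        linarith [Real.add_one_le_exp 4]

theorem integrableOn_sinhRatio_mul_exp (hα : 0 ≤ α) (hβ : 0 ≤ β) (hγ : 0 ≤ γ)
    (hsum : α + β + γ ≤ 1) {r : ℝ} (hr : r < 1) :
    IntegrableOn (fun t => sinhRatio α β γ t * Real.exp (r * t)) (Ioi 0) := by
  refine ((exp_neg_integrableOn_Ioi 0 (sub_pos.mpr hr)).const_mul (Real.exp 4)).mono'
    (by unfold sinhRatio; fun_prop) ?_
  filter_upwards [ae_restrict_mem measurableSet_Ioi] with t ht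
  calc ‖sinhRatio α β γ t * Real.exp (r * t)‖
      = |sinhRatio α β γ t| * Real.exp (r * t) := by
        rw [Real.norm_eq_abs, abs_mul, Real.abs_exp]
    _ ≤ Real.exp 4 * Real.exp (-t) * Real.exp (r * t) := by
        gcongr
        exact abs_sinhRatio_le hα hβ hγ hsum ht
    _ = Real.exp 4 * Real.exp (-(1 - r) * t) := by
        rw [mul_assoc, ← Real.exp_add]
        ring_nf

end SinhRatio

noncomputable def fTAmplitude (N : ℕ) (B r t : ℝ) : ℂ :=
  ↑(-2 * (sinhRatio ((N - 1) / N) (B / (2 * N)) ((2 - B) / (2 * N)) t * Real.exp (r * t)))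

theorem integrableOn_fTAmplitude {N : ℕ} (hN : 1 ≤ N) {B : ℝ} (hB0 : 0 ≤ B) (hB2 : B ≤ 2)
    {r : ℝ} (hr : r < 1) : IntegrableOn (fTAmplitude N B r) (Ioi 0) := by
  have hN1 : (1 : ℝ) ≤ N := by exact_mod_cast hN
  have hsum : ((N : ℝ) - 1) / N + B / (2 * N) + (2 - B) / (2 * N) ≤ 1 := by
    field_simp
    linarith
  exact ((integrableOn_sinhRatio_mul_exp (div_nonneg (by linarith) (by positivity))
    (by positivity) (div_nonneg (by linarith) (by positivity)) hsum hr).const_mul (-2)).ofReal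

theorem MeasureTheory.IntegrableOn.mul_exp_ofReal_mul_I {f : ℝ → ℂ} {s : Set ℝ}
    (hf : IntegrableOn f s) (c : ℝ) : IntegrableOn (fun t => f t * exp (↑(c * t) * I)) s :=
  Integrable.mul_bdd hf
    (by fun_prop : Continuous fun t : ℝ => exp (↑(c * t) * I)).aestronglyMeasurable
    (ae_of_all _ fun t => (norm_exp_ofReal_mul_I _).le)

/-- Riemann–Lebesgue. `f` need not be integrable: if it is not, every integral here is the junk
value `0`. -/
theorem tendsto_setIntegral_mul_exp_mul_I_atTop {s : Set ℝ} (hs : MeasurableSet s)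
    (f : ℝ → ℂ) {c : ℝ} (hc : c ≠ 0) :
    Tendsto (fun x : ℝ => ∫ t in s, f t * exp (↑(c * x * t) * I)) atTop (𝓝 0) := by
  have hk : -(c / (2 * Real.pi)) ≠ 0 := by simp [hc, Real.pi_ne_zero]
  have hw : Tendsto (fun x : ℝ => -(c / (2 * Real.pi)) * x) atTop (cocompact ℝ) :=
    Tendsto.mono_left (Homeomorph.mulLeft₀ _ hk).map_cocompact.le atTop_le_cocompact
  refine ((Real.tendsto_integral_exp_smul_cocompact (s.indicator f)).comp hw).congr fun x => ?_
  rw [Function.comp_apply, ← integral_indicator hs]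
  congr 1
  ext t
  by_cases ht : t ∈ s
  · simp only [indicator_of_mem ht, Circle.smul_def, Real.fourierChar_apply, smul_eq_mul]
    rw [mul_comm]
    congr 3
    push_cast
    field_simp
  · simp [indicator_of_notMem ht]

theorem Complex.cosh_ofReal_add_ofReal_mul_I (u v : ℝ) :
    cosh (↑u + ↑v * I) =
      ↑(Real.exp u / 2) * exp (↑v * I) + ↑(Real.exp (-u) / 2) * exp (↑(-v) * I) := by
  rw [Complex.cosh, neg_add, exp_add, exp_add, ofReal_neg, neg_mul]
  push_cast
  ring

theorem fT_ofReal_add_ofReal_mul_I (N : ℕ) (B x y t : ℝ) :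
    fT N B (↑x + ↑y * I) t =
      fTAmplitude N B (1 - y / Real.pi) t * exp (↑(Real.pi⁻¹ * x * t) * I) +
      fTAmplitude N B (-(1 - y / Real.pi)) t * exp (↑(-Real.pi⁻¹ * x * t) * I) := by
  have harg : (t : ℂ) * (1 - (↑x + ↑y * I) / (I * Real.pi)) =
      ↑((1 - y / Real.pi) * t) + ↑(Real.pi⁻¹ * x * t) * I := by
    have : (Real.pi : ℂ) ≠ 0 := ofReal_ne_zero.mpr Real.pi_ne_zero
    push_cast
    field_simp
    ring_nf
    rw [I_sq]
    ring
  rw [fT, harg, cosh_ofReal_add_ofReal_mul_I, fTAmplitude, fTAmplitude, sinhRatio]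
  push_cast
  ring_nf

/-- Normalization at infinity `F^T(∞) = 1`: along any horizontal line `Im θ = y` inside
the strip `0 < y < 2π`, `F^T(x + iy) → 1` as `x → +∞`. -/
theorem FT_normalized_at_infinity (N : ℕ) (hN : 2 ≤ N) (B : ℝ) (hB0 : 0 < B) (hB2 : B < 2)
    (y : ℝ) (hy0 : 0 < y) (hy2 : y < 2 * Real.pi) :
    Tendsto (fun x : ℝ => FT N B ((x : ℂ) + (y : ℂ) * I)) atTop (𝓝 1) := by
  set a := 1 - y / Real.pi
  have hyπ : 0 < y / Real.pi ∧ y / Real.pi < 2 :=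
    ⟨div_pos hy0 Real.pi_pos, (div_lt_iff₀ Real.pi_pos).mpr hy2⟩
  have hint (r : ℝ) (hr : r < 1) : IntegrableOn (fTAmplitude N B r) (Ioi 0) :=
    integrableOn_fTAmplitude (by omega) hB0.le hB2.le hr
  have hsplit (x : ℝ) : ∫ t in Ioi 0, fT N B (↑x + ↑y * I) t =
      (∫ t in Ioi 0, fTAmplitude N B a t * exp (↑(Real.pi⁻¹ * x * t) * I)) +
      ∫ t in Ioi 0, fTAmplitude N B (-a) t * exp (↑(-Real.pi⁻¹ * x * t) * I) := by
    simp_rw [fT_ofReal_add_ofReal_mul_I]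
    exact integral_add ((hint a (by linarith)).mul_exp_ofReal_mul_I _)
      ((hint (-a) (by linarith)).mul_exp_ofReal_mul_I _)
  have hπ : Real.pi⁻¹ ≠ 0 := inv_ne_zero Real.pi_ne_zero
  have hlim :
      Tendsto (fun x : ℝ => ∫ t in Ioi 0, fT N B (↑x + ↑y * I) t) atTop (𝓝 (0 + 0)) := by
    simp_rw [hsplit]
    exact (tendsto_setIntegral_mul_exp_mul_I_atTop measurableSet_Ioi _ hπ).add
      (tendsto_setIntegral_mul_exp_mul_I_atTop measurableSet_Ioi _ (neg_ne_zero.mpr hπ))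
  rw [add_zero] at hlim
  rw [← exp_zero]
  exact (continuous_exp.tendsto 0).comp hlim
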